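/- arXiv:2005.14111 — 5 statements merged into one kernel-verified Lean document; each statement's English description precedes it below -/
import Mathlib

section
/- If in a book embedding of a graph G there is a path p between two nodes a and b all of whose edges are assigned the same page (color) i, then no edge of color i whose endpoints are both not on p can exit the interval (a,b); that is, no such edge has exactly one endpoint strictly between a and b in the linear order. -/
open SimpleGraph

/-- Two edges (a,b) and (c,d) conflict in the linear order given by `π`. -/
def Conflict {V : Type*} (π : V → ℝ) (a b c d : V) : Prop :=
  (π a < π c ∧ π c < π b ∧ π b < π d) ∨ (π c < π a ∧ π a < π d ∧ π d < π b)

/-- A valid `k`-page assignment: conflicting edges of `G` get different colors. -/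
def ValidColoring {V : Type*} (G : SimpleGraph V) (π : V → ℝ) (k : ℕ)
    (col : Sym2 V → Fin k) : Prop :=
  ∀ a b c d, G.Adj a b → G.Adj c d → Conflict π a b c d → col s(a, b) ≠ col s(c, d)

/-- `x` lies strictly between `a` and `b` in the linear order `π`. -/
def StrictBtw {V : Type*} (π : V → ℝ) (a b x : V) : Prop :=
  min (π a) (π b) < π x ∧ π x < max (π a) (π b)

/-- `x` lies outside the closed interval `[a,b]`. -/
def OutsideCl {V : Type*} (π : V → ℝ) (a b x : V) : Prop :=
  π x < min (π a) (π b) ∨ max (π a) (π b) < π x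

/-- The edge `(x,y)` exits the interval `(a,b)`. -/
def Exits {V : Type*} (π : V → ℝ) (a b x y : V) : Prop :=
  (StrictBtw π a b x ∧ OutsideCl π a b y) ∨ (StrictBtw π a b y ∧ OutsideCl π a b x)

/-
If the colour-`i` edge `xy` exited `(a,b)`, then symmetrically `a` and `b` would lie on different
sides of the interval `(x,y)`: one strictly inside, the other strictly outside. The walk `p` from
`a` to `b` must then leave `(x,y)` along some edge `uv`; since `p` avoids `x` and `y`, the point `v`
lies strictly outside `[x,y]`, so `uv` and `xy` interleave. Both have colour `i`, contradicting the
validity of the colouring.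
-/

section Order

variable {V : Type*} {π : V → ℝ} {a b x y : V}

theorem Conflict.symm (h : Conflict π a b x y) : Conflict π x y a b :=
  Or.symm h

theorem OutsideCl.not_strictBtw (h : OutsideCl π a b x) : ¬ StrictBtw π a b x := by
  unfold OutsideCl at h
  unfold StrictBtw
  grind

theorem outsideCl_of_not_strictBtw (h : ¬ StrictBtw π a b x) (ha : π x ≠ π a) (hb : π x ≠ π b) :
    OutsideCl π a b x := by
  unfold StrictBtw at h
  unfold OutsideCl
  grind

theorem exits_swap_left : Exits π a b x y ↔ Exits π b a x y := by
  simp only [Exits, StrictBtw, OutsideCl, min_comm (π a), max_comm (π a)]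

theorem exits_swap_right : Exits π a b x y ↔ Exits π a b y x :=
  Or.comm

theorem exits_iff_conflict (hab : π a ≤ π b) (hxy : π x ≤ π y) :
    Exits π a b x y ↔ Conflict π a b x y := by
  simp only [Exits, StrictBtw, OutsideCl, Conflict, min_eq_left hab, max_eq_right hab]
  grind

theorem Exits.comm (h : Exits π a b x y) : Exits π x y a b := by
  wlog hab : π a ≤ π b generalizing a b
  · exact exits_swap_right.1 (this (exits_swap_left.1 h) (le_of_not_ge hab))
  wlog hxy : π x ≤ π y generalizing x y
  · exact exits_swap_left.1 (this (exits_swap_right.1 h) (le_of_not_ge hxy))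
  exact (exits_iff_conflict hxy hab).2 ((exits_iff_conflict hab hxy).1 h).symm

end Order

theorem ValidColoring.ne_of_exits {V : Type*} {G : SimpleGraph V} {π : V → ℝ} {k : ℕ}
    {col : Sym2 V → Fin k} (hvalid : ValidColoring G π k col) {a b x y : V} (hab : G.Adj a b)
    (hxy : G.Adj x y) (h : Exits π a b x y) : col s(a, b) ≠ col s(x, y) := by
  wlog hab' : π a ≤ π b generalizing a b
  · rw [Sym2.eq_swap]
    exact this hab.symm (exits_swap_left.1 h) (le_of_not_ge hab')
  wlog hxy' : π x ≤ π y generalizing x y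
  · rw [Sym2.eq_swap (a := x)]
    exact this hxy.symm (exits_swap_right.1 h) (le_of_not_ge hxy')
  exact hvalid a b x y hab hxy ((exits_iff_conflict hab' hxy').1 h)

namespace SimpleGraph.Walk

variable {V : Type*} {G : SimpleGraph V} {π : V → ℝ} {a b x y : V}

theorem exists_mem_edges_exits_of_strictBtw (p : G.Walk a b) (hπ : Function.Injective π)
    (hx : x ∉ p.support) (hy : y ∉ p.support) (ha : StrictBtw π x y a)
    (hb : ¬ StrictBtw π x y b) : ∃ u v, s(u, v) ∈ p.edges ∧ Exits π x y u v := by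
  obtain ⟨d, hd, hu, hv⟩ := p.exists_boundary_dart {v | StrictBtw π x y v} ha hb
  have hsupp : d.snd ∈ p.support := p.dart_snd_mem_support_of_mem_darts hd
  refine ⟨d.fst, d.snd, List.mem_map_of_mem hd, Or.inl ⟨hu, ?_⟩⟩
  exact outsideCl_of_not_strictBtw hv (hπ.ne fun h ↦ hx (h ▸ hsupp))
    (hπ.ne fun h ↦ hy (h ▸ hsupp))

theorem exists_mem_edges_exits (p : G.Walk a b) (hπ : Function.Injective π)
    (hx : x ∉ p.support) (hy : y ∉ p.support) (h : Exits π x y a b) :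
    ∃ u v, s(u, v) ∈ p.edges ∧ Exits π x y u v := by
  rcases h with ⟨ha, hb⟩ | ⟨hb, ha⟩
  · exact p.exists_mem_edges_exits_of_strictBtw hπ hx hy ha hb.not_strictBtw
  · obtain ⟨u, v, huv, hexit⟩ := p.reverse.exists_mem_edges_exits_of_strictBtw hπ
      (by rwa [support_reverse, List.mem_reverse]) (by rwa [support_reverse, List.mem_reverse])
      hb ha.not_strictBtw
    rw [edges_reverse, List.mem_reverse] at huv
    exact ⟨u, v, huv, hexit⟩

end SimpleGraph.Walk

/-- a monochromatic path of color `i` between `a` and `b` blocks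
color-`i` edges off the path from exiting the interval `(a,b)`. -/
theorem stmt0 {V : Type*} (G : SimpleGraph V) (π : V → ℝ)
    (hπ : Function.Injective π) (k : ℕ) (col : Sym2 V → Fin k)
    (hvalid : ValidColoring G π k col)
    (a b : V) (p : G.Walk a b) (i : Fin k)
    (hmono : ∀ e ∈ p.edges, col e = i)
    (x y : V) (hxy : G.Adj x y) (hcol : col s(x, y) = i)
    (hx : x ∉ p.support) (hy : y ∉ p.support) :
    ¬ Exits π a b x y := by
  intro hex
  obtain ⟨u, v, huv, hexit⟩ := p.exists_mem_edges_exits hπ hx hy hex.comm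
  exact hvalid.ne_of_exits hxy (p.adj_of_mem_edges huv) hexit (by rw [hcol, hmono _ huv])
end

section
/- If in a 3-page book embedding of a graph G there exist three paths p1, p2, p3 between two nodes a and b, where all edges of path p_i have color i for i = 1,2,3, then no edge of G both of whose endpoints lie off all three paths can exit the interval (a,b). -/
/-!
Suppose `x` lies strictly inside `(a, b)` and `y` outside `[a, b]`. Then exactly one of `a`, `b`
lies strictly inside the span of the edge `xy`, so every walk from `a` to `b` has an edge `uv` with
`u` inside that span and `v` not. If the walk avoids `x` and `y`, then `v` is strictly outside the
span, so `uv` conflicts with `xy` and has a different color. Three walks of the three colors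
leave no color for `xy`.
-/

open SimpleGraph

open Set

theorem xor_mem_uIoo_of_mem_uIoo_of_notMem_uIcc {α : Type*} [LinearOrder α] {a b x y : α}
    (hx : x ∈ uIoo a b) (hy : y ∉ uIcc a b) : Xor (a ∈ uIoo x y) (b ∈ uIoo x y) := by
  simp only [uIoo, uIcc, mem_Ioo, mem_Icc, not_and_or, not_le, Xor] at *
  rcases le_total a b with h | h <;> rcases le_total x y with h' | h' <;>
    simp_all only [inf_of_le_left, inf_of_le_right, sup_of_le_left, sup_of_le_right] <;> grind

theorem mem_uIoo_of_mem_uIcc_of_ne {α : Type*} [LinearOrder α] {a b c : α}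
    (h : c ∈ uIcc a b) (ha : c ≠ a) (hb : c ≠ b) : c ∈ uIoo a b := by
  rcases le_total a b with hab | hab
  · rw [uIcc_of_le hab] at h
    rw [uIoo_of_le hab]
    exact ⟨lt_of_le_of_ne h.1 ha.symm, lt_of_le_of_ne h.2 hb⟩
  · rw [uIcc_of_ge hab] at h
    rw [uIoo_of_ge hab]
    exact ⟨lt_of_le_of_ne h.1 hb.symm, lt_of_le_of_ne h.2 ha⟩

theorem outsideCl_iff {V : Type*} {π : V → ℝ} {a b y : V} :
    OutsideCl π a b y ↔ π y ∉ uIcc (π a) (π b) := by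
  rw [← Icc_min_max, mem_Icc, not_and_or, not_le, not_le, OutsideCl]

namespace SimpleGraph.Walk

variable {V : Type*} {G : SimpleGraph V}

theorem exists_adj_mem_edges_of_xor {a b : V} (p : G.Walk a b) (S : Set V)
    (h : Xor (a ∈ S) (b ∈ S)) : ∃ u v, G.Adj u v ∧ s(u, v) ∈ p.edges ∧ u ∈ S ∧ v ∉ S := by
  rcases h with ⟨ha, hb⟩ | ⟨hb, ha⟩
  · obtain ⟨d, hd, hdS⟩ := p.exists_boundary_dart S ha hb
    exact ⟨d.fst, d.snd, d.adj, List.mem_map_of_mem hd, hdS⟩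
  · obtain ⟨d, hd, hdS⟩ := p.reverse.exists_boundary_dart S hb ha
    have hd' : d.edge ∈ p.reverse.edges := List.mem_map_of_mem hd
    rw [edges_reverse, List.mem_reverse] at hd'
    exact ⟨d.fst, d.snd, d.adj, hd', hdS⟩

end SimpleGraph.Walk

section BookEmbedding

variable {V : Type*} {G : SimpleGraph V} {π : V → ℝ} {k : ℕ} {col : Sym2 V → Fin k}

theorem ValidColoring.col_ne_of_mem_uIoo (hvalid : ValidColoring G π k col) {x y u v : V}
    (hxy : G.Adj x y) (huv : G.Adj u v) (hu : π u ∈ uIoo (π x) (π y))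
    (hv : π v ∉ uIcc (π x) (π y)) : col s(x, y) ≠ col s(u, v) := by
  wlog hlt : π x < π y generalizing x y
  · rw [Sym2.eq_swap]
    refine this hxy.symm (uIoo_comm (π x) (π y) ▸ hu) (uIcc_comm (π x) (π y) ▸ hv) ?_
    rcases (not_lt.mp hlt).lt_or_eq with h | h
    · exact h
    · simp [h] at hu
  rw [uIoo_of_lt hlt] at hu
  rw [uIcc_of_lt hlt, mem_Icc, not_and_or, not_le, not_le] at hv
  rcases hv with hv | hv
  · rw [Sym2.eq_swap (a := u)]
    exact hvalid x y v u hxy huv.symm (Or.inr ⟨hv, hu.1, hu.2⟩)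
  · exact hvalid x y u v hxy huv (Or.inl ⟨hu.1, hu.2, hv⟩)

theorem ValidColoring.col_ne_of_exits (hvalid : ValidColoring G π k col)
    (hπ : Function.Injective π) {a b : V} (p : G.Walk a b) {c : Fin k}
    (hp : ∀ e ∈ p.edges, col e = c) {x y : V} (hxy : G.Adj x y)
    (hx : x ∉ p.support) (hy : y ∉ p.support) (hexit : Exits π a b x y) : col s(x, y) ≠ c := by
  wlog hin : StrictBtw π a b x ∧ OutsideCl π a b y generalizing x y
  · rw [Sym2.eq_swap]
    exact this hxy.symm hy hx hexit.symm (hexit.resolve_left hin)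
  obtain ⟨u, v, huv, hmem, hu, hv⟩ := p.exists_adj_mem_edges_of_xor (π ⁻¹' uIoo (π x) (π y))
    (xor_mem_uIoo_of_mem_uIoo_of_notMem_uIcc hin.1 (outsideCl_iff.mp hin.2))
  have hv_supp : v ∈ p.support := p.snd_mem_support_of_mem_edges hmem
  have hvx : π v ≠ π x := hπ.ne fun h => hx (h ▸ hv_supp)
  have hvy : π v ≠ π y := hπ.ne fun h => hy (h ▸ hv_supp)
  rw [← hp _ hmem]
  exact hvalid.col_ne_of_mem_uIoo hxy huv hu fun h => hv (mem_uIoo_of_mem_uIcc_of_ne h hvx hvy)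

end BookEmbedding

/-- monochromatic paths of all three colors between `a` and `b`
block any edge off the paths from exiting the interval `(a,b)`. -/
theorem stmt1 {V : Type*} (G : SimpleGraph V) (π : V → ℝ)
    (hπ : Function.Injective π) (col : Sym2 V → Fin 3)
    (hvalid : ValidColoring G π 3 col)
    (a b : V) (p1 p2 p3 : G.Walk a b)
    (h1 : ∀ e ∈ p1.edges, col e = 0)
    (h2 : ∀ e ∈ p2.edges, col e = 1)
    (h3 : ∀ e ∈ p3.edges, col e = 2)
    (x y : V) (hxy : G.Adj x y)
    (hx1 : x ∉ p1.support) (hx2 : x ∉ p2.support) (hx3 : x ∉ p3.support)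
    (hy1 : y ∉ p1.support) (hy2 : y ∉ p2.support) (hy3 : y ∉ p3.support) :
    ¬ Exits π a b x y := by
  intro hexit
  have no_fourth_color : ∀ c : Fin 3, c ≠ 0 → c ≠ 1 → c ≠ 2 → False := by decide
  exact no_fourth_color (col s(x, y))
    (hvalid.col_ne_of_exits hπ p1 h1 hxy hx1 hy1 hexit)
    (hvalid.col_ne_of_exits hπ p2 h2 hxy hx2 hy2 hexit)
    (hvalid.col_ne_of_exits hπ p3 h3 hxy hx3 hy3 hexit)
end

section
/- Suppose in a 3-page book embedding there are nodes 1, 2 and two nodes u, v strictly between them, joined by an edge (u,v) of color 3, and suppose at least 16 'marked' nodes lie strictly between u and v, each adjacent to both 1 and 2. Let y1 be the marked node closest to 1 among those in (u,v), and y2 the marked node closest to 2, and assume edge (1,y2) has color 1 and edge (2,y1) has color 2. Then every edge from node 1 to a marked node in (u,v) other than y1 has color 1, and every edge from node 2 to a marked node in (u,v) other than y2 has color 2. -/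
/-!
An edge from `n1` to a marked node `m` interleaves with `(u, v)`, so it is not on page 2
(the third page, counting from 0). If moreover `m ≠ y1`, then `y1` lies strictly between `n1`
and `m`, so the edge also interleaves with `(y1, n2)`, which is on page 1; the only page left
is 0. Symmetrically, an edge from `n2` to `m ≠ y2` interleaves with `(u, v)` and `(n1, y2)`.
-/

open SimpleGraph

namespace ValidColoring

variable {V : Type*} {G : SimpleGraph V} {π : V → ℝ} {k : ℕ} {col : Sym2 V → Fin k}

theorem col_ne_of_interleaved (h : ValidColoring G π k col) {a b c d : V}
    (hab : G.Adj a b) (hcd : G.Adj c d) (hac : π a < π c) (hcb : π c < π b) (hbd : π b < π d) :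
    col s(a, b) ≠ col s(c, d) :=
  h a b c d hab hcd (Or.inl ⟨hac, hcb, hbd⟩)

end ValidColoring

theorem stmt13_general {V : Type*} (G : SimpleGraph V) (π : V → ℝ)
    (hπ : Function.Injective π) (col : Sym2 V → Fin 3)
    (hvalid : ValidColoring G π 3 col)
    (n1 n2 u v : V)
    (hord : π n1 < π u ∧ π u < π v ∧ π v < π n2)
    (huv : G.Adj u v) (huvc : col s(u, v) = 2)
    (M : Finset V)
    (hM : ∀ m ∈ M, (π u < π m ∧ π m < π v) ∧ G.Adj n1 m ∧ G.Adj n2 m)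
    (y1 : V) (hy1 : y1 ∈ M) (hy1min : ∀ m ∈ M, π y1 ≤ π m)
    (y2 : V) (hy2 : y2 ∈ M) (hy2max : ∀ m ∈ M, π m ≤ π y2)
    (h1y2 : col s(n1, y2) = 0) (h2y1 : col s(n2, y1) = 1) :
    ∀ m ∈ M, (m ≠ y1 → col s(n1, m) = 0) ∧ (m ≠ y2 → col s(n2, m) = 1) := by
  obtain ⟨h1u, -, hv2⟩ := hord
  intro m hm
  obtain ⟨⟨hum, hmv⟩, h1m, h2m⟩ := hM m hm
  refine ⟨fun hne => ?_, fun hne => ?_⟩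
  · obtain ⟨⟨huy1, -⟩, -, h2y1'⟩ := hM y1 hy1
    have hy1m : π y1 < π m := (hy1min m hm).lt_of_ne (hπ.ne (Ne.symm hne))
    have hne2 := hvalid.col_ne_of_interleaved h1m huv h1u hum hmv
    have hne1 := hvalid.col_ne_of_interleaved h1m h2y1'.symm (h1u.trans huy1) hy1m (hmv.trans hv2)
    rw [huvc] at hne2
    rw [Sym2.eq_swap (a := y1), h2y1] at hne1
    omega
  · obtain ⟨⟨-, hy2v⟩, h1y2', -⟩ := hM y2 hy2
    have hmy2 : π m < π y2 := (hy2max m hm).lt_of_ne (hπ.ne hne)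
    have hne2 := hvalid.col_ne_of_interleaved huv h2m.symm hum hmv hv2
    have hne0 := hvalid.col_ne_of_interleaved h1y2' h2m.symm (h1u.trans hum) hmy2 (hy2v.trans hv2)
    rw [huvc] at hne2
    rw [h1y2] at hne0
    rw [Sym2.eq_swap]
    omega

/-- with the color-3 edge (u,v) and at least 16 marked common
neighbors of 1 and 2 strictly inside (u,v), where y1 (resp. y2) is the marked
node closest to 1 (resp. 2), edge (1,y2) colored 1 and edge (2,y1) colored 2,
every edge from 1 to a marked node other than y1 has color 1 and every edge
from 2 to a marked node other than y2 has color 2. -/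
theorem stmt13 {V : Type*} [DecidableEq V] (G : SimpleGraph V) (π : V → ℝ)
    (hπ : Function.Injective π) (col : Sym2 V → Fin 3)
    (hvalid : ValidColoring G π 3 col)
    (n1 n2 u v : V)
    (hord : π n1 < π u ∧ π u < π v ∧ π v < π n2)
    (huv : G.Adj u v) (huvc : col s(u, v) = 2)
    (M : Finset V) (hMcard : 16 ≤ M.card)
    (hM : ∀ m ∈ M, (π u < π m ∧ π m < π v) ∧ G.Adj n1 m ∧ G.Adj n2 m)
    (y1 : V) (hy1 : y1 ∈ M) (hy1min : ∀ m ∈ M, π y1 ≤ π m)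
    (y2 : V) (hy2 : y2 ∈ M) (hy2max : ∀ m ∈ M, π m ≤ π y2)
    (h1y2 : col s(n1, y2) = 0) (h2y1 : col s(n2, y1) = 1) :
    ∀ m ∈ M, (m ≠ y1 → col s(n1, m) = 0) ∧ (m ≠ y2 → col s(n2, m) = 1) :=
  stmt13_general G π hπ col hvalid n1 n2 u v hord huv huvc M hM y1 hy1 hy1min y2 hy2 hy2max h1y2
    h2y1
end

section
/- Let π be a linear order containing nodes in the order s, a, c1, c2, b where edges (s,a) and (s,b) have color 1, there are color-2 edges (t,a),(t,b) to a node t outside the interval [s,b] on the same side as s or beyond b, the edge (a,c2) has color 2, and the edge (b,c1) has color 3. Then no valid 3-page extension can place a node d adjacent to both a and to a node in the interval (c2,b) such that d lies in (c2,b) and the edge (a,d) is colored: the edge (a,d) conflicts with a color-1 edge (s,c1), the color-2 edge (c2,t), and the color-3 edge (b,c1), so no color is available for it. -/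
open SimpleGraph

theorem ValidColoring.not_adj_of_forall_color_conflict {V : Type*} {G : SimpleGraph V}
    {π : V → ℝ} {k : ℕ} {col : Sym2 V → Fin k} (hvalid : ValidColoring G π k col) {a d : V}
    (hcover : ∀ i : Fin k, ∃ p q, G.Adj p q ∧ col s(p, q) = i ∧ Conflict π p q a d) :
    ¬ G.Adj a d := by
  intro had
  obtain ⟨p, q, hpq, hcol, hconf⟩ := hcover (col s(a, d))
  exact hvalid p q a d hpq had hconf hcol

theorem stmt15_general {V : Type*} (G : SimpleGraph V) (π : V → ℝ)
    (col : Sym2 V → Fin 3)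
    (hvalid : ValidColoring G π 3 col)
    (s a c1 c2 b t : V)
    (hord : π s < π a ∧ π a < π c1 ∧ π c1 < π c2 ∧ π c2 < π b)
    (ht : π t < π s ∨ π b < π t)
    (hsc1 : G.Adj s c1) (hsc1c : col s(s, c1) = 0)
    (htc2 : G.Adj t c2) (htc2c : col s(t, c2) = 1)
    (hbc1 : G.Adj b c1) (hbc1c : col s(b, c1) = 2) :
    ¬ ∃ d, G.Adj a d ∧ π c2 < π d ∧ π d < π b := by
  rintro ⟨d, had, hc2d, hdb⟩
  obtain ⟨hsa, hac1, hc1c2, -⟩ := hord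
  refine hvalid.not_adj_of_forall_color_conflict (fun i => ?_) had
  fin_cases i
  · exact ⟨s, c1, hsc1, hsc1c, .inl ⟨hsa, hac1, hc1c2.trans hc2d⟩⟩
  · rcases ht with hts | hbt
    · exact ⟨t, c2, htc2, htc2c, .inl ⟨hts.trans hsa, hac1.trans hc1c2, hc2d⟩⟩
    · exact ⟨c2, t, htc2.symm, Sym2.eq_swap ▸ htc2c, .inr ⟨hac1.trans hc1c2, hc2d, hdb.trans hbt⟩⟩
  · exact ⟨c1, b, hbc1.symm, Sym2.eq_swap ▸ hbc1c, .inr ⟨hac1, hc1c2.trans hc2d, hdb⟩⟩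

/-- with the order s,a,c1,c2,b, the hub t outside [s,b], the
color-1 edges (s,a),(s,b),(s,c1), the color-2 edges (t,a),(t,b),(t,c2),(a,c2)
and the color-3 edge (b,c1), there is no node d in the interval (c2,b)
adjacent to a: no color is available for the edge (a,d). -/
theorem stmt15 {V : Type*} (G : SimpleGraph V) (π : V → ℝ)
    (hπ : Function.Injective π) (col : Sym2 V → Fin 3)
    (hvalid : ValidColoring G π 3 col)
    (s a c1 c2 b t : V)
    (hord : π s < π a ∧ π a < π c1 ∧ π c1 < π c2 ∧ π c2 < π b)
    (ht : π t < π s ∨ π b < π t)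
    (hsa : G.Adj s a) (hsac : col s(s, a) = 0)
    (hsb : G.Adj s b) (hsbc : col s(s, b) = 0)
    (hsc1 : G.Adj s c1) (hsc1c : col s(s, c1) = 0)
    (hta : G.Adj t a) (htac : col s(t, a) = 1)
    (htb : G.Adj t b) (htbc : col s(t, b) = 1)
    (htc2 : G.Adj t c2) (htc2c : col s(t, c2) = 1)
    (hac2 : G.Adj a c2) (hac2c : col s(a, c2) = 1)
    (hbc1 : G.Adj b c1) (hbc1c : col s(b, c1) = 2) :
    ¬ ∃ d, G.Adj a d ∧ π c2 < π d ∧ π d < π b :=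
  stmt15_general G π col hvalid s a c1 c2 b t hord ht hsc1 hsc1c htc2 htc2c hbc1 hbc1c
end

section
/- In any 3-page book embedding of a graph G, if nodes a and b are connected by monochromatic paths of all three colors, and C1, C2 are two connected components of G minus the nodes of these three paths such that C1 contains a node strictly inside the interval (a,b) and C2 contains a node outside [a,b], then no edge of G joins a node of C1 to a node of C2 (indeed C1 and C2 are distinct components, and moreover all of C1 lies inside (a,b) and all of C2 lies outside). -/
open SimpleGraph

/-! If an edge `xy` between vertices off the three paths had `x` inside `(a,b)` and `y` outside
`[a,b]`, then exactly one of `a`, `b` would lie strictly between `x` and `y`. Every `a`–`b` path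
avoiding `x` and `y` therefore has an edge with one end strictly between `x` and `y` and the other
outside `[x,y]`, an edge crossing `xy`; as the paths occupy all three pages, no page is left for
`xy`. Off the paths no vertex equals `a` or `b`, so every vertex there is inside or outside, and the
side of a vertex is constant along the edges of `G - paths`, hence on its components. -/

namespace SimpleGraph.Walk

variable {V : Type*} {G : SimpleGraph V}

lemma exists_mem_edges_of_xor {a b : V} (p : G.Walk a b) (P : Set V) (h : Xor (a ∈ P) (b ∈ P)) :
    ∃ u v, s(u, v) ∈ p.edges ∧ u ∈ P ∧ v ∉ P := by
  rcases h with ⟨ha, hb⟩ | ⟨hb, ha⟩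
  · obtain ⟨d, hd, hu, hv⟩ := p.exists_boundary_dart P ha hb
    exact ⟨d.fst, d.snd, List.mem_map_of_mem hd, hu, hv⟩
  · obtain ⟨d, hd, hu, hv⟩ := p.exists_boundary_dart Pᶜ ha (not_not.mpr hb)
    exact ⟨d.snd, d.fst, Sym2.eq_swap ▸ List.mem_map_of_mem hd, not_not.mp hv, hu⟩

end SimpleGraph.Walk

section Interval

variable {V : Type*} {π : V → ℝ} {a b x y : V}

lemma strictBtw_or_outsideCl (hπ : Function.Injective π) (ha : x ≠ a) (hb : x ≠ b) :
    StrictBtw π a b x ∨ OutsideCl π a b x := by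
  have := hπ.ne ha
  have := hπ.ne hb
  unfold StrictBtw OutsideCl
  grind

lemma StrictBtw.not_outsideCl (h : StrictBtw π a b x) : ¬ OutsideCl π a b x := by
  unfold StrictBtw OutsideCl at *
  grind

lemma StrictBtw.xor_of_outsideCl (hx : StrictBtw π a b x) (hy : OutsideCl π a b y) :
    Xor (StrictBtw π x y a) (StrictBtw π x y b) := by
  unfold StrictBtw OutsideCl at *
  grind

end Interval

section BookEmbedding

variable {V : Type*} {G : SimpleGraph V} {π : V → ℝ} {k : ℕ} {col : Sym2 V → Fin k}
  {a b c d x y : V}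

lemma ValidColoring.col_ne_of_strictBtw_of_outsideCl (hvalid : ValidColoring G π k col)
    (hab : G.Adj a b) (hcd : G.Adj c d) (hc : StrictBtw π a b c) (hd : OutsideCl π a b d) :
    col s(a, b) ≠ col s(c, d) := by
  unfold StrictBtw at hc
  unfold OutsideCl at hd
  -- `Conflict` only recognises edges written from left to right, hence the swaps.
  rcases le_total (π a) (π b) with h | h
  · simp only [min_eq_left h, max_eq_right h] at hc hd
    rcases hd with hd | hd
    · rw [Sym2.eq_swap (a := c)]
      exact hvalid a b d c hab hcd.symm (.inr ⟨hd, hc.1, hc.2⟩)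
    · exact hvalid a b c d hab hcd (.inl ⟨hc.1, hc.2, hd⟩)
  · simp only [min_eq_right h, max_eq_left h] at hc hd
    rw [Sym2.eq_swap (a := a)]
    rcases hd with hd | hd
    · rw [Sym2.eq_swap (a := c)]
      exact hvalid b a d c hab.symm hcd.symm (.inr ⟨hd, hc.1, hc.2⟩)
    · exact hvalid b a c d hab.symm hcd (.inl ⟨hc.1, hc.2, hd⟩)

lemma ValidColoring.exists_mem_edges_col_ne (hπ : Function.Injective π)
    (hvalid : ValidColoring G π k col) (p : G.Walk a b) (hxp : x ∉ p.support)
    (hyp : y ∉ p.support) (hxy : G.Adj x y) (hx : StrictBtw π a b x) (hy : OutsideCl π a b y) :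
    ∃ e ∈ p.edges, col e ≠ col s(x, y) := by
  obtain ⟨u, v, he, hu, hv⟩ :=
    p.exists_mem_edges_of_xor {v | StrictBtw π x y v} (hx.xor_of_outsideCl hy)
  have hvp := p.snd_mem_support_of_mem_edges he
  have hv' : OutsideCl π x y v :=
    (strictBtw_or_outsideCl hπ (ne_of_mem_of_not_mem hvp hxp)
      (ne_of_mem_of_not_mem hvp hyp)).resolve_left hv
  exact ⟨_, he, (hvalid.col_ne_of_strictBtw_of_outsideCl hxy (p.adj_of_mem_edges he) hu hv').symm⟩

lemma ValidColoring.not_outsideCl_of_forall_page (hπ : Function.Injective π)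
    (hvalid : ValidColoring G π k col)
    (hpages : ∀ i : Fin k, ∃ p : G.Walk a b,
      x ∉ p.support ∧ y ∉ p.support ∧ ∀ e ∈ p.edges, col e = i)
    (hxy : G.Adj x y) (hx : StrictBtw π a b x) : ¬ OutsideCl π a b y := by
  intro hy
  obtain ⟨p, hxp, hyp, hcol⟩ := hpages (col s(x, y))
  obtain ⟨e, he, hne⟩ := hvalid.exists_mem_edges_col_ne hπ p hxp hyp hxy hx hy
  exact hne (hcol e he)

lemma strictBtw_iff_of_reachable (hπ : Function.Injective π) {S : Set V} (ha : a ∉ S)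
    (hb : b ∉ S) (hS : ∀ x y : S, G.Adj x y → StrictBtw π a b x → ¬ OutsideCl π a b y)
    {x y : S} (h : (G.induce S).Reachable x y) :
    StrictBtw π a b x ↔ StrictBtw π a b y := by
  suffices ∀ x y : S, (G.induce S).Reachable x y → StrictBtw π a b x → StrictBtw π a b y from
    ⟨this x y h, this y x h.symm⟩
  rintro x y ⟨w⟩ hx
  by_contra hy
  obtain ⟨d, -, hu, hv⟩ := w.exists_boundary_dart {v | StrictBtw π a b v} hx hy
  exact hS _ _ d.adj hu ((strictBtw_or_outsideCl hπ (ne_of_mem_of_not_mem d.snd.2 ha)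
    (ne_of_mem_of_not_mem d.snd.2 hb)).resolve_left hv)

lemma outsideCl_of_reachable (hπ : Function.Injective π) {S : Set V} (ha : a ∉ S)
    (hb : b ∉ S) (hS : ∀ x y : S, G.Adj x y → StrictBtw π a b x → ¬ OutsideCl π a b y)
    {x y : S} (h : (G.induce S).Reachable x y) (hx : OutsideCl π a b x) :
    OutsideCl π a b y :=
  (strictBtw_or_outsideCl hπ (ne_of_mem_of_not_mem y.2 ha)
    (ne_of_mem_of_not_mem y.2 hb)).resolve_left fun hy =>
      ((strictBtw_iff_of_reachable hπ ha hb hS h).2 hy).not_outsideCl hx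

end BookEmbedding

/-- given monochromatic paths of all three colors between a and b,
if component C1 of G minus the paths has a node strictly inside (a,b) and
component C2 has a node outside [a,b], then no edge joins C1 to C2, the
components are distinct, all of C1 lies inside (a,b) and all of C2 outside. -/
theorem stmt16 {V : Type*} (G : SimpleGraph V) (π : V → ℝ)
    (hπ : Function.Injective π) (col : Sym2 V → Fin 3)
    (hvalid : ValidColoring G π 3 col)
    (a b : V) (p1 p2 p3 : G.Walk a b)
    (h1 : ∀ e ∈ p1.edges, col e = 0)
    (h2 : ∀ e ∈ p2.edges, col e = 1)
    (h3 : ∀ e ∈ p3.edges, col e = 2)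
    (S : Set V)
    (hS : S = {v | v ∉ p1.support ∧ v ∉ p2.support ∧ v ∉ p3.support})
    (C1 C2 : (G.induce S).ConnectedComponent)
    (hC1 : ∃ x : S, (G.induce S).connectedComponentMk x = C1 ∧ StrictBtw π a b (x : V))
    (hC2 : ∃ y : S, (G.induce S).connectedComponentMk y = C2 ∧ OutsideCl π a b (y : V)) :
    (∀ (x y : S), (G.induce S).connectedComponentMk x = C1 →
        (G.induce S).connectedComponentMk y = C2 → ¬ G.Adj (x : V) (y : V)) ∧
      C1 ≠ C2 ∧
      (∀ x : S, (G.induce S).connectedComponentMk x = C1 → StrictBtw π a b (x : V)) ∧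
      (∀ y : S, (G.induce S).connectedComponentMk y = C2 → OutsideCl π a b (y : V)) := by
  have hS' : ∀ v ∈ S, v ∉ p1.support ∧ v ∉ p2.support ∧ v ∉ p3.support :=
    hS ▸ fun _ hv => hv
  have ha : a ∉ S := fun h => (hS' a h).1 p1.start_mem_support
  have hb : b ∉ S := fun h => (hS' b h).1 p1.end_mem_support
  have hexit : ∀ x y : S, G.Adj x y → StrictBtw π a b x → ¬ OutsideCl π a b y := by
    refine fun x y => hvalid.not_outsideCl_of_forall_page hπ fun i => ?_
    fin_cases i
    exacts [⟨p1, (hS' x x.2).1, (hS' y y.2).1, h1⟩, ⟨p2, (hS' x x.2).2.1, (hS' y y.2).2.1, h2⟩,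
      ⟨p3, (hS' x x.2).2.2, (hS' y y.2).2.2, h3⟩]
  obtain ⟨x₀, rfl, hx₀⟩ := hC1
  obtain ⟨y₀, rfl, hy₀⟩ := hC2
  have hin (x : S) (hx : (G.induce S).connectedComponentMk x = .mk _ x₀) : StrictBtw π a b x :=
    (strictBtw_iff_of_reachable hπ ha hb hexit (ConnectedComponent.exact hx)).2 hx₀
  have hout (y : S) (hy : (G.induce S).connectedComponentMk y = .mk _ y₀) : OutsideCl π a b y :=
    outsideCl_of_reachable hπ ha hb hexit (ConnectedComponent.exact hy).symm hy₀
  exact ⟨fun x y hx hy hxy => hexit x y hxy (hin x hx) (hout y hy),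
    fun h => (hin y₀ h.symm).not_outsideCl hy₀, hin, hout⟩
end
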